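/- Let n ≥ 1, ε > 0 and t > 0. Let X₁, …, X_n be i.i.d. random variables on a probability space taking values in a measurable space, let E be a measurable set, p = Pr[X₁ ∈ E], and P̄ = (1/n)·∑_{i=1}^n 1{X_i ∈ E}. Let r be a real-valued random variable, independent of (X₁, …, X_n), whose law is the Laplace distribution Lap(1/ε). Then Pr[|(P̄ + r/n) − p| > t] ≤ 2·exp(−n·t²/2) + exp(−n·t·ε/2). -/

import Mathlib

/-!
Write `S = ∑ᵢ (1{Xᵢ ∈ E} - p)`, so that the deviation of the private estimate is `(S + r) / n`.
If it exceeds `t`, then `|S| ≥ n t / 2` or `|r| > n t / 2`. The centred indicators are bounded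
in an interval of length one, hence sub-Gaussian with variance proxy `1/4` by Hoeffding's lemma,
and Hoeffding's inequality bounds the first event by `2 exp (-n t² / 2)`. The Laplace tail is
computed exactly: `Pr[|r| > s] = exp (-ε s)`.
-/

open MeasureTheory ProbabilityTheory Real Set
open scoped NNReal

noncomputable def laplaceMeasure (b : ℝ) : Measure ℝ :=
  volume.withDensity fun x => ENNReal.ofReal (1 / (2 * b) * exp (-|x| / b))

lemma integral_Ioi_exp_neg_div {b : ℝ} (hb : 0 < b) (s : ℝ) :
    ∫ x in Ioi s, exp (-x / b) = b * exp (-s / b) := by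
  have h := integral_exp_mul_Ioi (neg_lt_zero.mpr (one_div_pos.mpr hb)) s
  simp only [neg_mul, one_div_mul_eq_div] at h
  simp only [neg_div, h]
  field_simp

lemma laplaceMeasure_lt_abs {b : ℝ} (hb : 0 < b) {s : ℝ} (hs : 0 ≤ s) :
    laplaceMeasure b {x | s < |x|} = ENNReal.ofReal (exp (-s / b)) := by
  set f : ℝ → ℝ := fun x => 1 / (2 * b) * exp (-|x| / b)
  set g : ℝ → ℝ := (Ioi s).indicator fun x => 1 / (2 * b) * exp (-x / b)
  have hS : MeasurableSet {x : ℝ | s < |x|} := measurableSet_lt measurable_const measurable_abs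
  -- `0 ≤ s` makes the two halves of the tail disjoint
  have hsplit : {x : ℝ | s < |x|}.indicator f = fun x => g x + g (-x) := by
    ext x
    rcases le_or_gt 0 x with hx | hx
    · have : -x ∉ Ioi s := by simp only [mem_Ioi]; linarith
      simp [f, g, indicator, abs_of_nonneg hx, this]
    · have : x ∉ Ioi s := by simp only [mem_Ioi]; linarith
      simp [f, g, indicator, abs_of_neg hx, this]
  have hg : Integrable g := by
    refine (integrable_indicator_iff measurableSet_Ioi).mpr (IntegrableOn.congr_fun
      ((exp_neg_integrableOn_Ioi s (inv_pos.mpr hb)).const_mul (1 / (2 * b)))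
      (fun x _ => ?_) measurableSet_Ioi)
    ring_nf
  have hf : IntegrableOn f {x | s < |x|} := by
    rw [← integrable_indicator_iff hS, hsplit]
    exact hg.add hg.comp_neg
  rw [laplaceMeasure, withDensity_apply _ hS,
    ← ofReal_integral_eq_lintegral_ofReal hf (ae_of_all _ fun x => by positivity),
    ← integral_indicator hS, hsplit, integral_add hg hg.comp_neg, integral_neg_eq_self,
    integral_indicator measurableSet_Ioi, integral_const_mul, integral_Ioi_exp_neg_div hb]
  congr 1
  field_simp
  ring

section

variable {Ω : Type*} {mΩ : MeasurableSpace Ω} {μ : Measure Ω}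

lemma measureReal_abs_sum_ge_le_of_iIndepFun {ι : Type*} {X : ι → Ω → ℝ}
    (h_indep : iIndepFun X μ) {c : ι → ℝ≥0} {s : Finset ι}
    (h_subG : ∀ i ∈ s, HasSubgaussianMGF (X i) (c i) μ) {ε : ℝ} (hε : 0 ≤ ε) :
    μ.real {ω | ε ≤ |∑ i ∈ s, X i ω|} ≤ 2 * exp (-ε ^ 2 / (2 * ∑ i ∈ s, c i)) := by
  have := h_indep.isProbabilityMeasure
  have h_neg : μ.real {ω | ε ≤ ∑ i ∈ s, (-X i) ω} ≤ exp (-ε ^ 2 / (2 * ∑ i ∈ s, c i)) :=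
    HasSubgaussianMGF.measure_sum_ge_le_of_iIndepFun
      (h_indep.comp (fun _ => Neg.neg) fun _ => measurable_neg) (fun i hi => (h_subG i hi).neg) hε
  calc μ.real {ω | ε ≤ |∑ i ∈ s, X i ω|}
      ≤ μ.real ({ω | ε ≤ ∑ i ∈ s, X i ω} ∪ {ω | ε ≤ ∑ i ∈ s, (-X i) ω}) := by
        refine measureReal_mono (fun ω hω => ?_)
        simpa only [mem_union, mem_ofPred_eq, Pi.neg_apply, Finset.sum_neg_distrib, le_abs]
          using hω
      _ ≤ _ := (measureReal_union_le _ _).trans (by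
        linarith [HasSubgaussianMGF.measure_sum_ge_le_of_iIndepFun h_indep h_subG hε])

lemma hasSubgaussianMGF_indicator_sub_measureReal [IsProbabilityMeasure μ] {α : Type*}
    [MeasurableSpace α] {X : Ω → α} (hX : Measurable X) {E : Set α} (hE : MeasurableSet E) :
    HasSubgaussianMGF (fun ω => E.indicator (fun _ => (1 : ℝ)) (X ω) - μ.real (X ⁻¹' E))
      (1 / 4) μ := by
  have h_mean : μ[fun ω => E.indicator (fun _ => (1 : ℝ)) (X ω)] = μ.real (X ⁻¹' E) := by
    simp_rw [← indicator_comp_right]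
    exact integral_indicator_one (hX hE)
  have h := hasSubgaussianMGF_of_mem_Icc (μ := μ) (a := 0) (b := 1)
    (X := fun ω => E.indicator (fun _ => (1 : ℝ)) (X ω))
    ((measurable_const.indicator hE).comp hX).aemeasurable
    (ae_of_all _ fun ω => ⟨indicator_nonneg (fun _ _ => zero_le_one) _,
      indicator_le_self' (fun _ _ => zero_le_one) _⟩)
  rw [h_mean] at h
  convert h using 1
  norm_num

lemma measure_abs_sum_indicator_sub_ge_le {ι : Type*} [Fintype ι] {α : Type*}
    [MeasurableSpace α] {X : ι → Ω → α} (hX : ∀ i, Measurable (X i))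
    (h_indep : iIndepFun X μ) {E : Set α} (hE : MeasurableSet E) {p : ℝ}
    (hp : ∀ i, μ.real (X i ⁻¹' E) = p) {ε : ℝ} (hε : 0 ≤ ε) :
    μ {ω | ε ≤ |∑ i, (E.indicator (fun _ => (1 : ℝ)) (X i ω) - p)|} ≤
      ENNReal.ofReal (2 * exp (-2 * ε ^ 2 / Fintype.card ι)) := by
  have := h_indep.isProbabilityMeasure
  have h := measureReal_abs_sum_ge_le_of_iIndepFun
    (h_indep.comp (fun _ x => E.indicator (fun _ => (1 : ℝ)) x - p)
      fun _ => (measurable_const.indicator hE).sub_const p)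
    (c := fun _ => 1 / 4) (s := Finset.univ)
    (fun i _ => hp i ▸ hasSubgaussianMGF_indicator_sub_measureReal (hX i) hE) hε
  rw [← ENNReal.ofReal_toReal (measure_ne_top μ _)]
  refine ENNReal.ofReal_le_ofReal (h.trans_eq ?_)
  congr 2
  simp only [Finset.sum_const, Finset.card_univ, nsmul_eq_mul]
  push_cast
  ring

lemma measure_lt_abs_add_le (μ : Measure Ω) (f g : Ω → ℝ) (t : ℝ) :
    μ {ω | t < |f ω + g ω|} ≤ μ {ω | t / 2 ≤ |f ω|} + μ {ω | t / 2 < |g ω|} := by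
  refine (measure_mono fun ω (hω : t < |f ω + g ω|) => ?_).trans (measure_union_le _ _)
  by_contra h
  simp only [mem_union, mem_ofPred_eq, not_or, not_le, not_lt] at h
  linarith [abs_add_le (f ω) (g ω)]

end

theorem private_empirical_frequency_bound_general {Ω : Type*} [MeasureSpace Ω]
    {E' : Type*} [MeasurableSpace E'] (n : ℕ) (hn : 1 ≤ n)
    (ε t : ℝ) (hε : 0 < ε) (ht : 0 < t)
    (X : Fin n → Ω → E') (hmeas : ∀ i, Measurable (X i))
    (hindep : iIndepFun X volume)
    (hident : ∀ i, IdentDistrib (X i) (X ⟨0, hn⟩) volume volume)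
    (E : Set E') (hE : MeasurableSet E)
    (r : Ω → ℝ) (hr : Measurable r)
    (hlaw : Measure.map r volume =
      volume.withDensity
        (fun x : ℝ => ENNReal.ofReal ((1 / (2 * (1 / ε))) * Real.exp (-|x| / (1 / ε))))) :
    volume {ω : Ω |
        t < |((1 / (n : ℝ)) * ∑ i : Fin n, E.indicator (fun _ => (1 : ℝ)) (X i ω)
              + r ω / n) -
            (volume (X ⟨0, hn⟩ ⁻¹' E)).toReal|} ≤
      ENNReal.ofReal (2 * Real.exp (-n * t ^ 2 / 2) + Real.exp (-n * t * ε / 2)) := by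
  have hn_pos : (0 : ℝ) < n := by exact_mod_cast hn
  set p := (volume (X ⟨0, hn⟩ ⁻¹' E)).toReal
  set S : Ω → ℝ := fun ω => ∑ i, (E.indicator (fun _ => (1 : ℝ)) (X i ω) - p)
  have h_freq : volume {ω | n * t / 2 ≤ |S ω|} ≤
      ENNReal.ofReal (2 * exp (-2 * (n * t / 2) ^ 2 / n)) := by
    simpa only [Fintype.card_fin] using measure_abs_sum_indicator_sub_ge_le hmeas hindep hE
      (fun i => by rw [measureReal_def, (hident i).measure_mem_eq hE]) (ε := n * t / 2)
      (by positivity)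
  have h_noise : volume {ω | n * t / 2 < |r ω|} =
      ENNReal.ofReal (exp (-(n * t / 2) / (1 / ε))) := by
    rw [← laplaceMeasure_lt_abs (one_div_pos.mpr hε) (by positivity), laplaceMeasure, ← hlaw,
      Measure.map_apply hr (measurableSet_lt measurable_const measurable_abs)]
    rfl
  have h_dev : ∀ ω, (1 / (n : ℝ)) * ∑ i, E.indicator (fun _ => (1 : ℝ)) (X i ω) + r ω / n - p
      = (S ω + r ω) / n := fun ω => by
    simp only [S, Finset.sum_sub_distrib, Finset.sum_const, Finset.card_univ, Fintype.card_fin,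
      nsmul_eq_mul]
    field_simp
    ring
  calc _ ≤ volume {ω | n * t < |S ω + r ω|} := measure_mono fun ω (hω : t < |_|) => by
          rwa [h_dev, abs_div, abs_of_pos hn_pos, lt_div_iff₀ hn_pos, mul_comm] at hω
    _ ≤ volume {ω | n * t / 2 ≤ |S ω|} + volume {ω | n * t / 2 < |r ω|} :=
        measure_lt_abs_add_le _ _ _ _
    _ ≤ ENNReal.ofReal (2 * exp (-2 * (n * t / 2) ^ 2 / n)) +
          ENNReal.ofReal (exp (-(n * t / 2) / (1 / ε))) := add_le_add h_freq h_noise.le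
    _ = _ := by
        have h_freq_exp : -2 * (n * t / 2) ^ 2 / n = -n * t ^ 2 / 2 := by field_simp
        have h_noise_exp : -(n * t / 2) / (1 / ε) = -n * t * ε / 2 := by field_simp
        rw [h_freq_exp, h_noise_exp, ← ENNReal.ofReal_add (by positivity) (by positivity)]

theorem private_empirical_frequency_bound {Ω : Type*} [MeasureSpace Ω]
    [IsProbabilityMeasure (volume : Measure Ω)]
    {E' : Type*} [MeasurableSpace E'] (n : ℕ) (hn : 1 ≤ n)
    (ε t : ℝ) (hε : 0 < ε) (ht : 0 < t)
    (X : Fin n → Ω → E') (hmeas : ∀ i, Measurable (X i))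
    (hindep : iIndepFun X volume)
    (hident : ∀ i, IdentDistrib (X i) (X ⟨0, hn⟩) volume volume)
    (E : Set E') (hE : MeasurableSet E)
    (r : Ω → ℝ) (hr : Measurable r)
    (hlaw : Measure.map r volume =
      volume.withDensity
        (fun x : ℝ => ENNReal.ofReal ((1 / (2 * (1 / ε))) * Real.exp (-|x| / (1 / ε)))))
    (hrindep : IndepFun (fun ω => fun i => X i ω) r volume) :
    volume {ω : Ω |
        t < |((1 / (n : ℝ)) * ∑ i : Fin n, E.indicator (fun _ => (1 : ℝ)) (X i ω)
              + r ω / n) -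
            (volume (X ⟨0, hn⟩ ⁻¹' E)).toReal|} ≤
      ENNReal.ofReal (2 * Real.exp (-n * t ^ 2 / 2) + Real.exp (-n * t * ε / 2)) :=
  private_empirical_frequency_bound_general n hn ε t hε ht X hmeas hindep hident E hE r hr hlaw
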